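/- Suppose C|φ(x)|² − |L_f φ(x)|² + L_f V(x) + (c − H(x))·ρ(x)·λ ≥ 0 holds for all x ∈ Ω (where ρ is any function and λ a scalar multiplier). Then for every T-periodic solution x(t) of x' = f(x) lying in the level set {H = c} with ∫₀^T φ(x(t)) dt = 0 and φ(x(·)) not identically zero, T ≥ 2π/√C. -/

import Mathlib

/-!
Along the orbit the multiplier term vanishes because `H (x t) = c`, and `L_f V` becomes the
derivative of the periodic function `V ∘ x`, whose integral over a period is zero. Integrating the
pointwise inequality therefore gives `∫ ‖(φ ∘ x)'‖² ≤ C ∫ ‖φ ∘ x‖²`. Wirtinger's inequality for the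
zero-mean periodic function `φ ∘ x`, proved coordinatewise from Parseval's identity and
`ĝ'(n) = 2πin/T · ĝ(n)`, gives `(2π/T)² ∫ ‖φ ∘ x‖² ≤ ∫ ‖(φ ∘ x)'‖²`; as `φ ∘ x ≢ 0` the integral
`∫ ‖φ ∘ x‖²` is positive, so `(2π/T)² ≤ C`.
-/

open scoped Real
open MeasureTheory Set Complex

theorem ContinuousOn.memLp_restrict_Ioc {E : Type*} [NormedAddCommGroup E] {g : ℝ → E} {a b : ℝ}
    (hg : ContinuousOn g (Icc a b)) (p : ENNReal) : MemLp g p (volume.restrict (Ioc a b)) := by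
  obtain ⟨M, hM⟩ := isCompact_Icc.exists_bound_of_continuousOn hg
  exact MemLp.of_bound ((hg.mono Ioc_subset_Icc_self).aestronglyMeasurable measurableSet_Ioc) M
    (ae_restrict_of_forall_mem measurableSet_Ioc fun t ht => hM t (Ioc_subset_Icc_self ht))

theorem norm_fourierCoeffOn_deriv {a b : ℝ} (hab : a < b) {g g' : ℝ → ℂ}
    (hg : ∀ t ∈ uIcc a b, HasDerivAt g (g' t) t) (hg' : IntervalIntegrable g' volume a b)
    (hper : g a = g b) (n : ℤ) :
    ‖fourierCoeffOn hab g' n‖ = 2 * π * |(n : ℝ)| / (b - a) * ‖fourierCoeffOn hab g n‖ := by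
  have hba : 0 < b - a := sub_pos.2 hab
  rcases eq_or_ne n 0 with rfl | hn
  · rw [fourierCoeffOn_eq_integral]
    simp [intervalIntegral.integral_eq_sub_of_hasDerivAt hg hg', hper]
  · have h := fourierCoeffOn_of_hasDerivAt hab hn hg hg'
    rw [hper, sub_self, mul_zero, zero_sub] at h
    have hn' : (n : ℂ) ≠ 0 := Int.cast_ne_zero.2 hn
    have hba' : (b : ℂ) - a ≠ 0 := by exact_mod_cast hba.ne'
    have hnorm : ‖(b : ℂ) - a‖ = b - a := by
      rw [← ofReal_sub, norm_real, Real.norm_of_nonneg hba.le]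
    have : fourierCoeffOn hab g' n = 2 * π * I * n / (b - a) * fourierCoeffOn hab g n := by
      rw [h]
      field_simp
    rw [this, norm_mul, norm_div, norm_mul, norm_mul, norm_mul, Complex.norm_I]
    simp [hnorm, abs_of_pos Real.pi_pos, Complex.norm_intCast]

theorem wirtinger_inequality_complex {a b : ℝ} (hab : a < b) {g g' : ℝ → ℂ}
    (hg : ∀ t ∈ uIcc a b, HasDerivAt g (g' t) t) (hg' : ContinuousOn g' (uIcc a b))
    (hper : g a = g b) (hmean : ∫ t in a..b, g t = 0) :
    (2 * π / (b - a)) ^ 2 * ∫ t in a..b, ‖g t‖ ^ 2 ≤ ∫ t in a..b, ‖g' t‖ ^ 2 := by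
  have hba : 0 < b - a := sub_pos.2 hab
  have hgc : ContinuousOn g (uIcc a b) := fun t ht => (hg t ht).continuousAt.continuousWithinAt
  rw [uIcc_of_le hab.le] at hgc hg'
  have hsum := hasSum_sq_fourierCoeffOn hab (hgc.memLp_restrict_Ioc 2)
  have hsum' := hasSum_sq_fourierCoeffOn hab (hg'.memLp_restrict_Ioc 2)
  have hcoeff := norm_fourierCoeffOn_deriv hab hg (hg'.intervalIntegrable_of_Icc hab.le) hper
  have hzero : fourierCoeffOn hab g 0 = 0 := by
    rw [fourierCoeffOn_eq_integral]
    simp [hmean]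
  have hterm (n : ℤ) : (2 * π / (b - a)) ^ 2 * ‖fourierCoeffOn hab g n‖ ^ 2
      ≤ ‖fourierCoeffOn hab g' n‖ ^ 2 := by
    rcases eq_or_ne n 0 with rfl | hn
    · simp [hzero]
    · have hn1 : (1 : ℝ) ≤ |(n : ℝ)| := by exact_mod_cast Int.one_le_abs hn
      rw [hcoeff n]
      calc (2 * π / (b - a)) ^ 2 * ‖fourierCoeffOn hab g n‖ ^ 2
          ≤ |(n : ℝ)| ^ 2 * ((2 * π / (b - a)) ^ 2 * ‖fourierCoeffOn hab g n‖ ^ 2) :=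
            le_mul_of_one_le_left (by positivity) (one_le_pow₀ hn1)
        _ = (2 * π * |(n : ℝ)| / (b - a) * ‖fourierCoeffOn hab g n‖) ^ 2 := by ring
  have h := hasSum_le hterm (hsum.mul_left _) hsum'
  rw [smul_eq_mul, smul_eq_mul, mul_left_comm] at h
  exact le_of_mul_le_mul_left h (inv_pos.2 hba)

theorem wirtinger_inequality {ι : Type*} [Fintype ι] {a b : ℝ} (hab : a < b)
    {y y' : ℝ → EuclideanSpace ℝ ι}
    (hy : ∀ t ∈ uIcc a b, HasDerivAt y (y' t) t) (hy' : ContinuousOn y' (uIcc a b))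
    (hper : y a = y b) (hmean : ∫ t in a..b, y t = 0) :
    (2 * π / (b - a)) ^ 2 * ∫ t in a..b, ‖y t‖ ^ 2 ≤ ∫ t in a..b, ‖y' t‖ ^ 2 := by
  have hyc : ContinuousOn y (uIcc a b) := fun t ht => (hy t ht).continuousAt.continuousWithinAt
  have hcoord (i : ι) :
      (2 * π / (b - a)) ^ 2 * ∫ t in a..b, ‖y t i‖ ^ 2 ≤ ∫ t in a..b, ‖y' t i‖ ^ 2 := by
    let L : EuclideanSpace ℝ ι →L[ℝ] ℂ := ofRealCLM.comp (EuclideanSpace.proj i)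
    have hL (z : EuclideanSpace ℝ ι) : ‖L z‖ = ‖z i‖ := by simp [L]
    have hmeanL : ∫ t in a..b, L (y t) = 0 := by
      rw [L.intervalIntegral_comp_comm (hyc.intervalIntegrable), hmean, map_zero]
    simpa only [Function.comp_apply, hL] using wirtinger_inequality_complex hab
      (fun t ht => L.hasFDerivAt.comp_hasDerivAt t (hy t ht)) (L.continuous.comp_continuousOn hy')
      (congrArg L hper) hmeanL
  have hint {z : ℝ → EuclideanSpace ℝ ι} (hz : ContinuousOn z (uIcc a b)) (i : ι) :
      IntervalIntegrable (fun t => ‖z t i‖ ^ 2) volume a b :=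
    (((EuclideanSpace.proj i).continuous.comp_continuousOn hz).norm.pow 2).intervalIntegrable
  simp only [EuclideanSpace.norm_sq_eq]
  rw [intervalIntegral.integral_finsetSum fun i _ => hint hyc i,
    intervalIntegral.integral_finsetSum fun i _ => hint hy' i, Finset.mul_sum]
  exact Finset.sum_le_sum fun i _ => hcoord i

theorem Function.Periodic.intervalIntegral_pos_of_pos {F : ℝ → ℝ} {T t₀ : ℝ}
    (hF : Function.Periodic F T) (hT : 0 < T) (hFc : Continuous F) (hF0 : 0 ≤ F)
    (ht₀ : 0 < F t₀) : 0 < ∫ t in (0 : ℝ)..T, F t := by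
  have hshift : ∫ t in (0 : ℝ)..T, F t = ∫ t in t₀ - T / 2..t₀ - T / 2 + T, F t := by
    simpa using hF.intervalIntegral_add_eq 0 (t₀ - T / 2)
  rw [hshift, intervalIntegral.integral_pos_iff_support_of_nonneg_ae
    (Filter.Eventually.of_forall hF0) (hFc.intervalIntegrable _ _)]
  refine ⟨by linarith, ?_⟩
  have hsub : {t | 0 < F t} ∩ Ioo (t₀ - T / 2) (t₀ - T / 2 + T)
      ⊆ Function.support F ∩ Ioc (t₀ - T / 2) (t₀ - T / 2 + T) :=
    inter_subset_inter (fun t ht => ne_of_gt ht) Ioo_subset_Ioc_self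
  refine lt_of_lt_of_le ?_ (measure_mono hsub)
  exact ((isOpen_lt continuous_const hFc).inter isOpen_Ioo).measure_pos volume
    ⟨t₀, ht₀, by linarith, by linarith⟩

theorem integral_norm_sq_le_mul_of_nonneg_add_deriv {E : Type*} [NormedAddCommGroup E]
    {a b C : ℝ} (hab : a ≤ b) {y z : ℝ → E} {w w' : ℝ → ℝ}
    (hy : ContinuousOn y (uIcc a b)) (hz : ContinuousOn z (uIcc a b))
    (hw : ∀ t ∈ uIcc a b, HasDerivAt w (w' t) t) (hw' : ContinuousOn w' (uIcc a b))
    (hper : w a = w b) (h : ∀ t ∈ uIcc a b, 0 ≤ C * ‖y t‖ ^ 2 - ‖z t‖ ^ 2 + w' t) :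
    ∫ t in a..b, ‖z t‖ ^ 2 ≤ C * ∫ t in a..b, ‖y t‖ ^ 2 := by
  have hiy : IntervalIntegrable (fun t => C * ‖y t‖ ^ 2) volume a b :=
    (continuousOn_const.mul (hy.norm.pow 2)).intervalIntegrable
  have hiz : IntervalIntegrable (fun t => ‖z t‖ ^ 2) volume a b :=
    (hz.norm.pow 2).intervalIntegrable
  have hw0 : ∫ t in a..b, w' t = 0 := by
    rw [intervalIntegral.integral_eq_sub_of_hasDerivAt hw hw'.intervalIntegrable, hper, sub_self]
  have hnonneg : 0 ≤ ∫ t in a..b, (C * ‖y t‖ ^ 2 - ‖z t‖ ^ 2 + w' t) :=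
    intervalIntegral.integral_nonneg hab fun t ht => h t (by rwa [uIcc_of_le hab])
  rw [intervalIntegral.integral_add (hiy.sub hiz) hw'.intervalIntegrable,
    intervalIntegral.integral_sub hiy hiz, intervalIntegral.integral_const_mul, hw0] at hnonneg
  linarith

theorem div_sqrt_le_of_sq_div_le {a C T : ℝ} (hT : 0 < T) (h : (a / T) ^ 2 ≤ C) :
    a / √C ≤ T := by
  rcases (Real.sqrt_nonneg C).eq_or_lt with hC | hC
  · rw [← hC, div_zero]
    exact hT.le
  · rw [div_le_iff₀ hC, ← div_le_iff₀' hT]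
    exact Real.le_sqrt_of_sq_le h

section Orbit

variable {E F : Type*} [NormedAddCommGroup E] [NormedSpace ℝ E] [NormedAddCommGroup F]
  [NormedSpace ℝ F] {Ω : Set E} {g : E → F}

theorem ContDiffOn.hasDerivAt_comp_of_mem (hΩ : IsOpen Ω) (hg : ContDiffOn ℝ 1 g Ω)
    {x : ℝ → E} {v : E} {t : ℝ} (hxΩ : x t ∈ Ω) (hx : HasDerivAt x v t) :
    HasDerivAt (fun s => g (x s)) (fderiv ℝ g (x t) v) t :=
  ((hg.differentiableOn one_ne_zero).differentiableAt
    (hΩ.mem_nhds hxΩ)).hasFDerivAt.comp_hasDerivAt t hx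

theorem ContDiffOn.continuous_fderiv_comp_apply (hΩ : IsOpen Ω) (hg : ContDiffOn ℝ 1 g Ω)
    {f : E → E} (hf : ContinuousOn f Ω) {x : ℝ → E} (hx : Continuous x) (hxΩ : ∀ t, x t ∈ Ω) :
    Continuous fun t => fderiv ℝ g (x t) (f (x t)) :=
  ((hg.continuousOn_fderiv_of_isOpen hΩ le_rfl).comp_continuous hx hxΩ).clm_apply
    (hf.comp_continuous hx hxΩ)

end Orbit

theorem s_procedure_period_bound_general {n m : ℕ}
    (Ω : Set (EuclideanSpace ℝ (Fin n))) (hΩ : IsOpen Ω)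
    (f : EuclideanSpace ℝ (Fin n) → EuclideanSpace ℝ (Fin n)) (hf : ContDiffOn ℝ 1 f Ω)
    (φ : EuclideanSpace ℝ (Fin n) → EuclideanSpace ℝ (Fin m)) (hφ : ContDiffOn ℝ 1 φ Ω)
    (V : EuclideanSpace ℝ (Fin n) → ℝ) (hV : ContDiffOn ℝ 1 V Ω)
    (H ρ : EuclideanSpace ℝ (Fin n) → ℝ) (c lam : ℝ)
    (C : ℝ)
    (hineq : ∀ x ∈ Ω,
      C * ‖φ x‖ ^ 2 - ‖fderiv ℝ φ x (f x)‖ ^ 2 + fderiv ℝ V x (f x)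
        + (c - H x) * ρ x * lam ≥ 0)
    (x : ℝ → EuclideanSpace ℝ (Fin n)) (hxΩ : ∀ t, x t ∈ Ω)
    (hsol : ∀ t, HasDerivAt x (f (x t)) t)
    (hlevel : ∀ t, H (x t) = c)
    (T : ℝ) (hT : 0 < T) (hper : ∀ t, x (t + T) = x t)
    (hmean : (∫ t in (0:ℝ)..T, φ (x t)) = 0)
    (hnonzero : ¬ (∀ t, φ (x t) = 0)) :
    2 * π / Real.sqrt C ≤ T := by
  have hx : Continuous x := continuous_iff_continuousAt.2 fun t => (hsol t).continuousAt
  have hx0 : x 0 = x T := by simpa using (hper 0).symm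
  have hy t := hφ.hasDerivAt_comp_of_mem hΩ (hxΩ t) (hsol t)
  have hw t := hV.hasDerivAt_comp_of_mem hΩ (hxΩ t) (hsol t)
  have hy' := hφ.continuous_fderiv_comp_apply hΩ hf.continuousOn hx hxΩ
  have hw' := hV.continuous_fderiv_comp_apply hΩ hf.continuousOn hx hxΩ
  have hyc : Continuous fun t => φ (x t) :=
    continuous_iff_continuousAt.2 fun t => (hy t).continuousAt
  have hupper := integral_norm_sq_le_mul_of_nonneg_add_deriv hT.le hyc.continuousOn
    hy'.continuousOn (fun t _ => hw t) hw'.continuousOn (by rw [hx0])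
    fun t _ => by simpa [hlevel t] using hineq (x t) (hxΩ t)
  have hlower := wirtinger_inequality hT (fun t _ => hy t) hy'.continuousOn (by rw [hx0]) hmean
  obtain ⟨t₀, ht₀⟩ := not_forall.1 hnonzero
  have hpos : 0 < ∫ t in (0 : ℝ)..T, ‖φ (x t)‖ ^ 2 :=
    Function.Periodic.intervalIntegral_pos_of_pos (fun t => by simp [hper t]) hT
      (hyc.norm.pow 2) (fun t => sq_nonneg _) (by positivity)
  rw [sub_zero] at hlower
  exact div_sqrt_le_of_sq_div_le hT (le_of_mul_le_mul_right (hlower.trans hupper) hpos)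

/-- S-procedure version of the period bound: if
`C|φ|² − |L_f φ|² + L_f V + (c − H)·ρ·λ ≥ 0` on `Ω`, then every `T`-periodic solution of
`x' = f(x)` lying in the level set `{H = c}` along which `φ` has zero mean and is not
identically zero has `T ≥ 2π/√C`. -/
theorem s_procedure_period_bound {n m : ℕ}
    (Ω : Set (EuclideanSpace ℝ (Fin n))) (hΩ : IsOpen Ω)
    (f : EuclideanSpace ℝ (Fin n) → EuclideanSpace ℝ (Fin n)) (hf : ContDiffOn ℝ 1 f Ω)
    (φ : EuclideanSpace ℝ (Fin n) → EuclideanSpace ℝ (Fin m)) (hφ : ContDiffOn ℝ 1 φ Ω)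
    (V : EuclideanSpace ℝ (Fin n) → ℝ) (hV : ContDiffOn ℝ 1 V Ω)
    (H ρ : EuclideanSpace ℝ (Fin n) → ℝ) (c lam : ℝ)
    (C : ℝ) (hC : 0 < C)
    (hineq : ∀ x ∈ Ω,
      C * ‖φ x‖ ^ 2 - ‖fderiv ℝ φ x (f x)‖ ^ 2 + fderiv ℝ V x (f x)
        + (c - H x) * ρ x * lam ≥ 0)
    (x : ℝ → EuclideanSpace ℝ (Fin n)) (hxΩ : ∀ t, x t ∈ Ω)
    (hsol : ∀ t, HasDerivAt x (f (x t)) t)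
    (hlevel : ∀ t, H (x t) = c)
    (T : ℝ) (hT : 0 < T) (hper : ∀ t, x (t + T) = x t)
    (hmean : (∫ t in (0:ℝ)..T, φ (x t)) = 0)
    (hnonzero : ¬ (∀ t, φ (x t) = 0)) :
    2 * π / Real.sqrt C ≤ T :=
  s_procedure_period_bound_general Ω hΩ f hf φ hφ V hV H ρ c lam C hineq x hxΩ hsol hlevel T hT hper
    hmean hnonzero
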